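/- arXiv:2301.00769 — 4 statements merged into one kernel-verified Lean document; each statement's English description precedes it below -/
import Mathlib

section
/- Let 1 ≤ p ≤ ∞ with conjugate exponent p', and let f ∈ L^p(ℝ). Then for every t > 0, ‖f∗Θ_t‖_∞ ≤ (c_p c_{p'})^{1/2} α_{p'} ‖f‖_p t^{−1/(2p)}, where c_p = p^{1/p}/(p')^{1/p'} (with c_1 = c_∞ = 1) and α_{p'} = 1 for p' = 1, α_{p'} = 1/((2√π)^{1−1/p'} (p')^{1/(2p')}) for 1 < p' < ∞, and α_{p'} = 1/(2√π) for p' = ∞. In particular ‖f∗Θ_t‖_∞ ≤ ‖f‖_p t^{−1/(2p)}. -/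
open MeasureTheory Real
open scoped ENNReal

/-- The Gauss–Weierstrass heat kernel on the real line. -/
noncomputable def heatKernel (t x : ℝ) : ℝ :=
  Real.exp (-x ^ 2 / (4 * t)) / (2 * Real.sqrt (Real.pi * t))

/-- The constant `c_p = p^{1/p} / (p')^{1/p'}`, with the convention `c_1 = c_∞ = 1`. -/
noncomputable def youngConst (p : ℝ≥0∞) : ℝ :=
  if p = 1 ∨ p = ∞ then 1
  else p.toReal ^ (1 / p.toReal) / (p.toReal / (p.toReal - 1)) ^ (1 - 1 / p.toReal)

/-- The constant `α_q` giving the `L^q` norm of the heat kernel. -/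
noncomputable def heatConst (q : ℝ≥0∞) : ℝ :=
  if q = 1 then 1
  else if q = ∞ then 1 / (2 * Real.sqrt Real.pi)
  else 1 / ((2 * Real.sqrt Real.pi) ^ (1 - 1 / q.toReal) * q.toReal ^ (1 / (2 * q.toReal)))

lemma heatKernel_nonneg (t x : ℝ) : 0 ≤ heatKernel t x := by
  unfold heatKernel
  positivity

lemma one_le_two_sqrt_pi : (1:ℝ) ≤ 2 * Real.sqrt Real.pi := by
  have h1 : (1:ℝ) ≤ Real.sqrt Real.pi := by
    rw [show (1:ℝ) = Real.sqrt 1 by simp]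
    exact Real.sqrt_le_sqrt (by linarith [Real.pi_gt_three])
  linarith

lemma heatConst_nonneg (q : ℝ≥0∞) : 0 ≤ heatConst q := by
  unfold heatConst
  split_ifs with h1 h2
  · norm_num
  · positivity
  · positivity

lemma heatConst_le_one (q : ℝ≥0∞) (hq : 1 ≤ q) : heatConst q ≤ 1 := by
  unfold heatConst
  split_ifs with h1 h2
  · exact le_refl 1
  · rw [div_le_one (by linarith [one_le_two_sqrt_pi])]
    exact one_le_two_sqrt_pi
  · have hr1 : (1:ℝ) ≤ q.toReal := by
      rw [show (1:ℝ) = (1:ℝ≥0∞).toReal by simp]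
      exact ENNReal.toReal_mono h2 hq
    have hb1 : (1:ℝ) ≤ (2 * Real.sqrt Real.pi) ^ (1 - 1 / q.toReal) :=
      Real.one_le_rpow one_le_two_sqrt_pi (by
        have : 1 / q.toReal ≤ 1 := by
          rw [div_le_one (by linarith)]; exact hr1
        linarith)
    have hb2 : (1:ℝ) ≤ q.toReal ^ (1 / (2 * q.toReal)) :=
      Real.one_le_rpow hr1 (by positivity)
    rw [div_le_one (by nlinarith)]
    nlinarith

lemma youngConst_mul (p p' : ℝ≥0∞) (hp : 1 ≤ p) (hpp' : 1 / p + 1 / p' = 1) :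
    youngConst p * youngConst p' = 1 := by
  by_cases hp1 : p = 1
  · subst hp1
    have hP : p' = ∞ := by
      rw [div_one] at hpp'
      have h0 : 1 / p' = 0 := by
        have h1 : (1:ℝ≥0∞) + 1 / p' = 1 + 0 := by rw [add_zero]; exact hpp'
        exact (ENNReal.add_right_inj (by simp)).mp h1
      rwa [one_div, ENNReal.inv_eq_zero] at h0
    subst hP
    simp [youngConst]
  by_cases hpt : p = ∞
  · subst hpt
    have hP : p' = 1 := by
      rw [ENNReal.div_top, zero_add, one_div, ENNReal.inv_eq_one] at hpp'
      exact hpp'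
    subst hP
    simp [youngConst]
  -- now 1 < p < ∞
  have hp0 : p ≠ 0 := fun h => by simp [h] at hp
  have hp'0 : p' ≠ 0 := by
    intro h
    rw [h] at hpp'
    simp [ENNReal.div_zero] at hpp'
  have hp't : p' ≠ ∞ := by
    intro h
    rw [h, ENNReal.div_top, add_zero, one_div, ENNReal.inv_eq_one] at hpp'
    exact hp1 hpp'
  have hp'1 : p' ≠ 1 := by
    intro h
    rw [h, div_one] at hpp'
    have h0 : 1 / p = 0 := by
      have : 1 / p + 1 = 0 + 1 := by simpa using hpp'
      exact (ENNReal.add_left_inj (by simp)).mp this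
    rw [one_div, ENNReal.inv_eq_zero] at h0
    exact hpt h0
  set a := p.toReal with ha
  set b := p'.toReal with hb
  have ha1 : 1 < a := by
    have := ENNReal.toReal_strict_mono hpt (lt_of_le_of_ne hp (Ne.symm hp1))
    simpa using this
  have hb0 : 0 < b := ENNReal.toReal_pos hp'0 hp't
  have hab : 1 / a + 1 / b = 1 := by
    have h3 := congrArg ENNReal.toReal hpp'
    rw [ENNReal.toReal_add (by simp [one_div, ENNReal.inv_ne_top, hp0])
      (by simp [one_div, ENNReal.inv_ne_top, hp'0]), ENNReal.toReal_div, ENNReal.toReal_div,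
      ENNReal.toReal_one] at h3
    exact h3
  have ha0 : (0:ℝ) < a := by linarith
  have hb1 : 1 < b := by
    by_contra h
    push_neg at h
    have h1a : 1 / a < 1 := by rw [div_lt_one (by linarith)]; exact ha1
    have h2b : 1 ≤ 1 / b := by rw [le_div_iff₀ hb0]; linarith
    have h3a : 0 < 1 / a := by positivity
    linarith
  have hab2 : b + a = a * b := by
    field_simp at hab
    linarith
  have key1 : a / (a - 1) = b := by
    rw [div_eq_iff (by linarith : a - 1 ≠ 0)]
    nlinarith
  have key2 : b / (b - 1) = a := by
    rw [div_eq_iff (by linarith : b - 1 ≠ 0)]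
    nlinarith
  have e1 : 1 - 1 / a = 1 / b := by
    field_simp
    nlinarith
  have e2 : 1 - 1 / b = 1 / a := by
    field_simp
    nlinarith
  rw [youngConst, youngConst, if_neg (by tauto), if_neg (by tauto), ← ha, ← hb,
    key1, key2, e1, e2]
  have h1 : (0:ℝ) < a ^ (1/a) := Real.rpow_pos_of_pos (by linarith) _
  have h2 : (0:ℝ) < b ^ (1/b) := Real.rpow_pos_of_pos (by linarith) _
  field_simp

/-- The `L^q` norm of the heat kernel. -/
lemma eLpNorm_heatKernel_le (q : ℝ≥0∞) (hq : 1 ≤ q) {t : ℝ} (ht : 0 < t) :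
    eLpNorm (heatKernel t) q volume ≤
      ENNReal.ofReal (heatConst q * t ^ (((1/q).toReal - 1)/2)) := by
  have hπ : (0:ℝ) < Real.pi := Real.pi_pos
  have hπt : (0:ℝ) < Real.pi * t := by positivity
  have hst : (0:ℝ) < Real.sqrt (Real.pi * t) := Real.sqrt_pos.2 hπt
  have hA : (0:ℝ) < 2 * Real.sqrt (Real.pi * t) := by linarith
  have hB : (0:ℝ) < 2 * Real.sqrt Real.pi := by positivity
  have hsplitA : 2 * Real.sqrt (Real.pi * t) = (2 * Real.sqrt Real.pi) * Real.sqrt t := by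
    rw [Real.sqrt_mul Real.pi_nonneg]
    ring
  by_cases hqt : q = ⊤
  · subst hqt
    have h0 : (((1:ℝ≥0∞)/(⊤:ℝ≥0∞)).toReal - 1)/2 = -(1/2 : ℝ) := by
      simp
      norm_num
    rw [h0, eLpNorm_exponent_top]
    refine eLpNormEssSup_le_of_ae_bound (C := heatConst ⊤ * t ^ (-(1/2) : ℝ))
      (ae_of_all _ fun x => ?_)
    rw [Real.norm_of_nonneg (heatKernel_nonneg t x)]
    have h1 : heatKernel t x ≤ 1 / (2 * Real.sqrt (Real.pi * t)) := by
      unfold heatKernel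
      gcongr
      exact Real.exp_le_one_iff.mpr (div_nonpos_of_nonpos_of_nonneg
        (neg_nonpos.2 (sq_nonneg x)) (by linarith))
    refine h1.trans (le_of_eq ?_)
    rw [heatConst, if_neg (by simp), if_pos rfl, Real.rpow_neg ht.le, ← Real.sqrt_eq_rpow,
      hsplitA]
    have hsqt : Real.sqrt t ≠ 0 := (Real.sqrt_pos.2 ht).ne'
    have hsqπ : Real.sqrt Real.pi ≠ 0 := (Real.sqrt_pos.2 hπ).ne'
    field_simp
  · have hq0 : q ≠ 0 := (lt_of_lt_of_le zero_lt_one hq).ne'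
    set r := q.toReal with hrr
    have hr1 : (1:ℝ) ≤ r := by
      rw [show (1:ℝ) = (1:ℝ≥0∞).toReal by simp]
      exact ENNReal.toReal_mono hqt hq
    have hr0 : (0:ℝ) < r := by linarith
    have hb : (0:ℝ) < r / (4*t) := by positivity
    set A := 2 * Real.sqrt (Real.pi * t) with hAdef
    have hpt2 : ∀ x : ℝ, heatKernel t x ^ (r:ℝ) =
        Real.exp (-(r/(4*t)) * x^2) / A ^ (r:ℝ) := by
      intro x
      unfold heatKernel
      rw [Real.div_rpow (Real.exp_nonneg _) hA.le, ← Real.exp_mul]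
      congr 1
      field_simp
    have hint : Integrable (fun x : ℝ => Real.exp (-(r/(4*t)) * x^2) / A ^ (r:ℝ)) volume :=
      (integrable_exp_neg_mul_sq hb).div_const _
    have hint2 : Integrable (fun x : ℝ => heatKernel t x ^ (r:ℝ)) volume := by
      simp_rw [hpt2]
      exact hint
    have hgauss : Real.sqrt (Real.pi / (r/(4*t))) = A / Real.sqrt r := by
      have h2 : Real.pi / (r/(4*t)) = A^2 / r := by
        rw [hAdef, mul_pow, Real.sq_sqrt hπt.le]
        field_simp
        ring
      rw [h2, Real.sqrt_div (sq_nonneg A), Real.sqrt_sq hA.le]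
    have hintval : ∫ x : ℝ, heatKernel t x ^ (r:ℝ) = A ^ (1 - r) / Real.sqrt r := by
      simp_rw [hpt2]
      rw [integral_div, integral_gaussian, hgauss, Real.rpow_sub hA, Real.rpow_one]
      rw [div_div, div_div]
      congr 1
      ring
    rw [eLpNorm_eq_lintegral_rpow_enorm_toReal hq0 hqt, ← hrr]
    have hlint : ∫⁻ x : ℝ, ‖heatKernel t x‖ₑ ^ (r:ℝ) ∂volume
        = ENNReal.ofReal (A ^ (1 - r) / Real.sqrt r) := by
      have hpt3 : (fun x : ℝ => ‖heatKernel t x‖ₑ ^ (r:ℝ)) =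
          fun x : ℝ => ENNReal.ofReal (heatKernel t x ^ (r:ℝ)) := by
        funext x
        rw [Real.enorm_eq_ofReal (heatKernel_nonneg t x),
          ENNReal.ofReal_rpow_of_nonneg (heatKernel_nonneg t x) hr0.le]
      rw [hpt3, ← ofReal_integral_eq_lintegral_ofReal hint2
        (ae_of_all _ fun x => Real.rpow_nonneg (heatKernel_nonneg t x) r), hintval]
    rw [hlint, ENNReal.ofReal_rpow_of_nonneg (by positivity) (by positivity : (0:ℝ) ≤ 1/r)]
    refine ENNReal.ofReal_le_ofReal (le_of_eq ?_)
    have hhc : heatConst q = (2 * Real.sqrt Real.pi) ^ (1/r - 1) * r ^ (-(1/(2*r))) := by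
      by_cases hq1 : q = 1
      · have hr1' : r = 1 := by rw [hrr, hq1, ENNReal.toReal_one]
        rw [hq1, heatConst, if_pos rfl, hr1']
        norm_num
      · rw [heatConst, if_neg hq1, if_neg hqt, ← hrr,
          show 1/r - 1 = -(1 - 1/r) by ring, Real.rpow_neg hB.le, Real.rpow_neg hr0.le,
          ← mul_inv, one_div]
    have hqinv : ((1:ℝ≥0∞)/q).toReal = 1/r := by
      rw [ENNReal.toReal_div, ENNReal.toReal_one, hrr]
    rw [hqinv, hhc]
    have e1 : (1 - r) * (1/r) = 1/r - 1 := by field_simp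
    have e2 : (1/2 : ℝ) * (1/r) = 1/(2*r) := by field_simp
    have e3 : ((1-r) * (1/r)) * (1/2 : ℝ) = (1/r - 1)/2 := by field_simp
    calc (A ^ (1 - r) / Real.sqrt r) ^ (1/r)
        = (A ^ (1-r)) ^ (1/r) / (Real.sqrt r) ^ (1/r) :=
          Real.div_rpow (Real.rpow_nonneg hA.le _) (Real.sqrt_nonneg r) _
      _ = A ^ ((1-r)*(1/r)) / r ^ ((1/2:ℝ)*(1/r)) := by
          rw [← Real.rpow_mul hA.le, Real.sqrt_eq_rpow, ← Real.rpow_mul hr0.le]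
      _ = ((2 * Real.sqrt Real.pi) * Real.sqrt t) ^ ((1-r)*(1/r)) / r ^ (1/(2*r)) := by
          rw [hsplitA, e2]
      _ = (2 * Real.sqrt Real.pi) ^ (1/r - 1) * (Real.sqrt t) ^ ((1-r)*(1/r)) * r ^ (-(1/(2*r))) := by
          rw [Real.mul_rpow hB.le (Real.sqrt_nonneg t), e1, div_eq_mul_inv,
            ← Real.rpow_neg hr0.le]
      _ = (2 * Real.sqrt Real.pi) ^ (1/r - 1) * r ^ (-(1/(2*r))) * t ^ ((1/r - 1)/2) := by
          rw [Real.sqrt_eq_rpow t, ← Real.rpow_mul ht.le,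
            show (1/2:ℝ) * ((1-r) * (1/r)) = (1/r - 1)/2 by field_simp]
          ring

theorem eLpNorm_top_convolution_heatKernel_le (p p' : ℝ≥0∞) (hp : 1 ≤ p)
    (hpp' : 1 / p + 1 / p' = 1)
    (f : ℝ → ℝ) (hf : MemLp f p (volume : Measure ℝ)) (t : ℝ) (ht : 0 < t) :
    eLpNorm (fun x : ℝ => ∫ y : ℝ, f (x - y) * heatKernel t y) ⊤ (volume : Measure ℝ) ≤
      ENNReal.ofReal (Real.sqrt (youngConst p * youngConst p') * heatConst p') *
        eLpNorm f p (volume : Measure ℝ) *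
        ENNReal.ofReal (t ^ (-((1 / p).toReal / 2))) ∧
    eLpNorm (fun x : ℝ => ∫ y : ℝ, f (x - y) * heatKernel t y) ⊤ (volume : Measure ℝ) ≤
      eLpNorm f p (volume : Measure ℝ) * ENNReal.ofReal (t ^ (-((1 / p).toReal / 2))) := by
  have hp'1 : 1 ≤ p' := by
    have h : 1 / p' ≤ 1 := by
      calc 1 / p' ≤ 1 / p + 1 / p' := le_add_self
        _ = 1 := hpp'
    rw [one_div] at h
    exact ENNReal.inv_le_one.mp h
  have h1p : 1 / p ≠ ∞ := by
    simp only [one_div, Ne, ENNReal.inv_eq_top]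
    positivity
  have h1p' : 1 / p' ≠ ∞ := by
    simp only [one_div, Ne, ENNReal.inv_eq_top]
    positivity
  have hsum : (1/p).toReal + (1/p').toReal = 1 := by
    rw [← ENNReal.toReal_add h1p h1p', hpp', ENNReal.toReal_one]
  have hexp : ((1/p').toReal - 1)/2 = -((1/p).toReal/2) := by linarith
  set K := eLpNorm (heatKernel t) p' volume with hK
  have hΘc : Continuous (heatKernel t) := by
    unfold heatKernel
    fun_prop
  have hΘm : AEStronglyMeasurable (heatKernel t) volume := hΘc.aestronglyMeasurable
  have key : ∀ x : ℝ, (‖∫ y : ℝ, f (x - y) * heatKernel t y‖₊ : ℝ≥0∞) ≤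
      eLpNorm f p volume * K := by
    intro x
    have hmp : MeasurePreserving (fun y : ℝ => x - y) volume volume :=
      Measure.measurePreserving_sub_left volume x
    have hgm : AEStronglyMeasurable (fun y => f (x - y)) volume :=
      hf.1.comp_quasiMeasurePreserving hmp.quasiMeasurePreserving
    calc (‖∫ y : ℝ, f (x - y) * heatKernel t y‖₊ : ℝ≥0∞)
        ≤ ∫⁻ y, ‖f (x - y) * heatKernel t y‖ₑ ∂volume :=
          enorm_integral_le_lintegral_enorm _
      _ = eLpNorm (fun y => f (x - y) * heatKernel t y) 1 volume :=
          eLpNorm_one_eq_lintegral_enorm.symm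
      _ ≤ eLpNorm (fun y => f (x - y)) p volume * K := by
          refine (eLpNorm_le_eLpNorm_mul_eLpNorm'_of_norm
            (hpqr := ⟨by simpa [one_div] using hpp'⟩) hgm hΘm (· * ·) 1
            (ae_of_all _ fun y => by simp [norm_mul])).trans (le_of_eq (by simp [hK]))
      _ = eLpNorm f p volume * K := by
          rw [show (fun y => f (x - y)) = f ∘ (fun y : ℝ => x - y) from rfl,
            eLpNorm_comp_measurePreserving hf.1 hmp]
  have main : eLpNorm (fun x : ℝ => ∫ y : ℝ, f (x - y) * heatKernel t y) ⊤ volume ≤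
      eLpNorm f p volume * K := by
    rw [eLpNorm_exponent_top, eLpNormEssSup]
    exact essSup_le_of_ae_le _ (ae_of_all _ key)
  have hKle : K ≤ ENNReal.ofReal (heatConst p' * t ^ (-((1/p).toReal/2))) := by
    have h := eLpNorm_heatKernel_le p' hp'1 ht
    rwa [hexp] at h
  have htpow : (0:ℝ) ≤ t ^ (-((1/p).toReal/2)) := Real.rpow_nonneg ht.le _
  constructor
  · calc eLpNorm (fun x : ℝ => ∫ y : ℝ, f (x - y) * heatKernel t y) ⊤ volume
        ≤ eLpNorm f p volume * K := main
      _ ≤ eLpNorm f p volume * ENNReal.ofReal (heatConst p' * t ^ (-((1/p).toReal/2))) := by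
          gcongr
      _ = ENNReal.ofReal (Real.sqrt (youngConst p * youngConst p') * heatConst p') *
            eLpNorm f p volume * ENNReal.ofReal (t ^ (-((1/p).toReal/2))) := by
          rw [youngConst_mul p p' hp hpp', Real.sqrt_one, one_mul,
            ENNReal.ofReal_mul (heatConst_nonneg _)]
          ring
  · calc eLpNorm (fun x : ℝ => ∫ y : ℝ, f (x - y) * heatKernel t y) ⊤ volume
        ≤ eLpNorm f p volume * K := main
      _ ≤ eLpNorm f p volume * ENNReal.ofReal (t ^ (-((1/p).toReal/2))) := by
          refine mul_le_mul_right (hKle.trans (ENNReal.ofReal_le_ofReal ?_)) _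
          calc heatConst p' * t ^ (-((1/p).toReal/2))
              ≤ 1 * t ^ (-((1/p).toReal/2)) := by
                apply mul_le_mul_of_nonneg_right (heatConst_le_one p' hp'1) htpow
            _ = _ := one_mul _
end

section
/- Let p, q, r ∈ [1, ∞] satisfy 1/p + 1/q = 1 + 1/r. For every t > 0, ‖Θ_t∗Θ_t‖_r / ‖Θ_t‖_p = α_r / (α_p · 2^{(1−1/r)/2} · t^{(1−1/q)/2}), where α_q = 1 for q = 1, α_q = 1/((2√π)^{1−1/q} q^{1/(2q)}) for 1 < q < ∞, and α_q = 1/(2√π) for q = ∞. -/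
open MeasureTheory Real
open scoped ENNReal

lemma heatKernel_pos (t : ℝ) (ht : 0 < t) (x : ℝ) : 0 < heatKernel t x := by
  unfold heatKernel
  have := Real.pi_pos
  positivity

lemma heatKernel_conv (t : ℝ) (ht : 0 < t) (x : ℝ) :
    ∫ y : ℝ, heatKernel t (x - y) * heatKernel t y = heatKernel (2 * t) x := by
  have hπ := Real.pi_pos
  have h1 : ∀ y : ℝ, heatKernel t (x - y) * heatKernel t y
      = (Real.exp (-x ^ 2 / (4 * (2 * t))) / (2 * Real.sqrt (Real.pi * t)) ^ 2)
        * Real.exp (-(1 / (2 * t)) * (y + -(x / 2)) ^ 2) := by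
    intro y
    unfold heatKernel
    rw [div_mul_div_comm, ← Real.exp_add, div_mul_eq_mul_div, ← Real.exp_add, ← sq]
    congr 1
    field_simp
    ring
  simp_rw [h1]
  rw [MeasureTheory.integral_const_mul]
  have h2 : ∫ y : ℝ, Real.exp (-(1 / (2 * t)) * (y + -(x / 2)) ^ 2)
      = Real.sqrt (Real.pi / (1 / (2 * t))) := by
    rw [integral_add_right_eq_self (fun y => Real.exp (-(1 / (2 * t)) * y ^ 2)) (-(x / 2))]
    exact integral_gaussian (1 / (2 * t))
  rw [h2]
  unfold heatKernel
  have e3 : Real.sqrt (Real.pi / (1 / (2 * t))) = Real.sqrt (Real.pi * (2 * t)) := by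
    rw [show Real.pi / (1 / (2 * t)) = Real.pi * (2 * t) by field_simp]
  rw [e3, div_mul_eq_mul_div, div_eq_div_iff (by positivity) (by positivity)]
  have e1 : Real.sqrt (Real.pi * (2 * t)) * Real.sqrt (Real.pi * (2 * t)) = Real.pi * (2 * t) :=
    Real.mul_self_sqrt (by positivity)
  have e2 : Real.sqrt (Real.pi * t) * Real.sqrt (Real.pi * t) = Real.pi * t :=
    Real.mul_self_sqrt (by positivity)
  linear_combination (2 * Real.exp (-x ^ 2 / (4 * (2 * t)))) * e1
    - (4 * Real.exp (-x ^ 2 / (4 * (2 * t)))) * e2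

lemma sqrt_pi_pos : 0 < Real.sqrt Real.pi := Real.sqrt_pos.mpr Real.pi_pos

lemma heatConst_pos (q : ℝ≥0∞) (hq : 1 ≤ q) : 0 < heatConst q := by
  have := sqrt_pi_pos
  unfold heatConst
  split_ifs with h1 h2
  · norm_num
  · positivity
  · have hq0 : 0 < q.toReal := ENNReal.toReal_pos (by simpa using (one_pos.trans_le hq).ne') h2
    positivity

lemma heatConst_formula (q : ℝ≥0∞) (hq : 1 ≤ q) (hqt : q ≠ ∞) :
    heatConst q = 1 / ((2 * Real.sqrt Real.pi) ^ (1 - 1 / q.toReal)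
      * q.toReal ^ (1 / (2 * q.toReal))) := by
  unfold heatConst
  split_ifs with h1
  · subst h1
    norm_num
  · rfl

lemma alg_key (s t : ℝ) (hs : 1 ≤ s) (ht : 0 < t) :
    ((2 * Real.sqrt (Real.pi * t))⁻¹ ^ s * Real.sqrt (Real.pi / (s / (4 * t)))) ^ (1 / s)
      = 1 / ((2 * Real.sqrt Real.pi) ^ (1 - 1 / s) * s ^ (1 / (2 * s)))
        / t ^ ((1 - 1 / s) / 2) := by
  have hπ := Real.pi_pos
  have hs0 : (0:ℝ) < s := lt_of_lt_of_le one_pos hs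
  have hsp := sqrt_pi_pos
  have h2 : Real.pi / (s / (4 * t)) = 2 ^ 2 * (Real.pi * t) / s := by
    field_simp; ring
  have hL : (0:ℝ) < (2 * Real.sqrt (Real.pi * t))⁻¹ ^ s * Real.sqrt (Real.pi / (s / (4 * t)))
      := by rw [h2]; positivity
  have hLs : (0:ℝ) < ((2 * Real.sqrt (Real.pi * t))⁻¹ ^ s
      * Real.sqrt (Real.pi / (s / (4 * t)))) ^ (1 / s) := Real.rpow_pos_of_pos hL _
  have hR : (0:ℝ) < 1 / ((2 * Real.sqrt Real.pi) ^ (1 - 1 / s) * s ^ (1 / (2 * s)))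
      / t ^ ((1 - 1 / s) / 2) := by positivity
  apply Real.log_injOn_pos (Set.mem_Ioi.mpr hLs) (Set.mem_Ioi.mpr hR)
  have lc : Real.log (2 * Real.sqrt (Real.pi * t))
      = Real.log 2 + (Real.log Real.pi + Real.log t) / 2 := by
    rw [Real.log_mul two_ne_zero (by positivity), Real.log_sqrt (by positivity),
      Real.log_mul hπ.ne' ht.ne']
  have lg : Real.log (Real.sqrt (Real.pi / (s / (4 * t))))
      = (2 * Real.log 2 + Real.log Real.pi + Real.log t - Real.log s) / 2 := by
    rw [h2, Real.log_sqrt (by positivity), Real.log_div (by positivity) hs0.ne',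
      Real.log_mul (by positivity) (by positivity), Real.log_mul hπ.ne' ht.ne', Real.log_pow]
    push_cast
    ring
  have l2p : Real.log (2 * Real.sqrt Real.pi) = Real.log 2 + Real.log Real.pi / 2 := by
    rw [Real.log_mul two_ne_zero hsp.ne', Real.log_sqrt hπ.le]
  rw [Real.log_rpow hL, Real.log_mul (by positivity) (by positivity),
    Real.log_rpow (by positivity), Real.log_inv, lc, lg,
    Real.log_div (by positivity) (by positivity),
    Real.log_div one_ne_zero (by positivity), Real.log_one,
    Real.log_mul (by positivity) (by positivity),
    Real.log_rpow (by positivity), Real.log_rpow hs0, Real.log_rpow ht, l2p]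
  field_simp
  ring

lemma heatKernel_continuous (t : ℝ) : Continuous (heatKernel t) := by
  unfold heatKernel
  fun_prop

lemma heatKernel_zero (t : ℝ) : heatKernel t 0 = 1 / (2 * Real.sqrt (Real.pi * t)) := by
  unfold heatKernel
  norm_num

lemma eLpNormEssSup_heatKernel (t : ℝ) (ht : 0 < t) :
    eLpNormEssSup (heatKernel t) volume
      = ENNReal.ofReal (1 / (2 * Real.sqrt (Real.pi * t))) := by
  have hπ := Real.pi_pos
  have hM : (0:ℝ) < 1 / (2 * Real.sqrt (Real.pi * t)) := by positivity
  apply le_antisymm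
  · apply essSup_le_of_ae_le (hfbdd := by isBoundedDefault)
    filter_upwards with x
    rw [← ofReal_norm, Real.norm_of_nonneg (heatKernel_pos t ht x).le]
    apply ENNReal.ofReal_le_ofReal
    unfold heatKernel
    rw [div_le_div_iff₀ (by positivity) (by positivity)]
    have he : Real.exp (-x ^ 2 / (4 * t)) ≤ 1 := Real.exp_le_one_iff.mpr
      (div_nonpos_of_nonpos_of_nonneg (neg_nonpos.mpr (sq_nonneg x)) (by positivity))
    nlinarith [mul_le_mul_of_nonneg_right he
      (by positivity : (0:ℝ) ≤ 2 * Real.sqrt (Real.pi * t))]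
  · by_contra h
    push_neg at h
    obtain ⟨c, hc1, hc2⟩ := exists_between h
    have hctop : c ≠ ∞ := hc2.trans_le le_top |>.ne
    have hae := ae_lt_of_essSup_lt hc1
    have hU : IsOpen {x : ℝ | c.toReal < heatKernel t x} :=
      isOpen_lt continuous_const (heatKernel_continuous t)
    have h0 : (0:ℝ) ∈ {x : ℝ | c.toReal < heatKernel t x} := by
      rw [Set.mem_setOf_eq, heatKernel_zero]
      exact ENNReal.toReal_lt_of_lt_ofReal hc2
    have hpos : 0 < volume {x : ℝ | c.toReal < heatKernel t x} :=
      hU.measure_pos volume ⟨0, h0⟩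
    have hnull : volume {x : ℝ | c.toReal < heatKernel t x} = 0 := by
      refine measure_mono_null ?_ (ae_iff.mp hae)
      intro x hx
      rw [Set.mem_setOf_eq] at hx ⊢
      rw [← ofReal_norm, Real.norm_of_nonneg (heatKernel_pos t ht x).le]
      rw [not_lt]
      exact le_of_lt ((ENNReal.lt_ofReal_iff_toReal_lt hctop).mpr hx)
    exact absurd hnull hpos.ne'

lemma eLpNorm_heatKernel (p : ℝ≥0∞) (hp : 1 ≤ p) (t : ℝ) (ht : 0 < t) :
    eLpNorm (heatKernel t) p volume
      = ENNReal.ofReal (heatConst p / t ^ ((1 - (1 / p).toReal) / 2)) := by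
  have hπ := Real.pi_pos
  have hsp := sqrt_pi_pos
  have hp0 : p ≠ 0 := (zero_lt_one.trans_le hp).ne'
  rcases eq_or_ne p ∞ with hptop | hptop
  · subst hptop
    rw [eLpNorm_exponent_top, eLpNormEssSup_heatKernel t ht]
    congr 1
    have : heatConst ∞ = 1 / (2 * Real.sqrt Real.pi) := by
      unfold heatConst
      norm_num
    rw [this]
    have h2 : ((1 : ℝ≥0∞) / ⊤).toReal = 0 := by simp
    rw [h2, show ((1:ℝ) - 0) / 2 = 1 / 2 by norm_num, ← Real.sqrt_eq_rpow,
      Real.sqrt_mul hπ.le]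
    rw [div_div]
    congr 1
    ring
  · have hs1 : 1 ≤ p.toReal := by
      rw [← ENNReal.toReal_one]
      exact ENNReal.toReal_mono hptop hp
    set s := p.toReal with hsdef
    have hs0 : (0:ℝ) < s := lt_of_lt_of_le one_pos hs1
    rw [eLpNorm_eq_lintegral_rpow_enorm_toReal hp0 hptop]
    have hpt : ∀ x : ℝ, heatKernel t x ^ s
        = (2 * Real.sqrt (Real.pi * t))⁻¹ ^ s * Real.exp (-(s / (4 * t)) * x ^ 2) := by
      intro x
      unfold heatKernel
      rw [div_eq_mul_inv, Real.mul_rpow (Real.exp_nonneg _) (by positivity), mul_comm]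
      congr 1
      rw [← Real.exp_mul]
      congr 1
      ring
    have hfx : ∀ x : ℝ, ‖heatKernel t x‖ₑ ^ s
        = ENNReal.ofReal (heatKernel t x ^ s) := by
      intro x
      rw [← ofReal_norm, Real.norm_of_nonneg (heatKernel_pos t ht x).le,
        ENNReal.ofReal_rpow_of_nonneg (heatKernel_pos t ht x).le hs0.le]
    simp_rw [← hsdef, hfx]
    have hint : Integrable (fun x : ℝ => heatKernel t x ^ s) := by
      simp_rw [hpt]
      exact (integrable_exp_neg_mul_sq (by positivity)).const_mul _
    rw [← MeasureTheory.ofReal_integral_eq_lintegral_ofReal hint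
      (Filter.Eventually.of_forall fun x => Real.rpow_nonneg (heatKernel_pos t ht x).le s)]
    have hI : ∫ x : ℝ, heatKernel t x ^ s
        = (2 * Real.sqrt (Real.pi * t))⁻¹ ^ s * Real.sqrt (Real.pi / (s / (4 * t))) := by
      simp_rw [hpt]
      rw [MeasureTheory.integral_const_mul, integral_gaussian]
    have hA : (0:ℝ) ≤ (2 * Real.sqrt (Real.pi * t))⁻¹ ^ s
        * Real.sqrt (Real.pi / (s / (4 * t))) := by positivity
    rw [hI, ENNReal.ofReal_rpow_of_nonneg hA (by positivity)]
    congr 1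
    rw [heatConst_formula p hp hptop,
      show ((1:ℝ≥0∞)/p).toReal = 1/s by rw [one_div, ENNReal.toReal_inv, one_div]]
    exact alg_key s t hs1 ht

theorem heatKernel_self_convolution_norm_ratio (p q r : ℝ≥0∞)
    (hp : 1 ≤ p) (hq : 1 ≤ q) (hr : 1 ≤ r) (hpqr : 1 / p + 1 / q = 1 + 1 / r)
    (t : ℝ) (ht : 0 < t) :
    (eLpNorm (fun x : ℝ => ∫ y : ℝ, heatKernel t (x - y) * heatKernel t y) r
        (volume : Measure ℝ)).toReal /
      (eLpNorm (heatKernel t) p (volume : Measure ℝ)).toReal =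
      heatConst r /
        (heatConst p * 2 ^ ((1 - (1 / r).toReal) / 2) * t ^ ((1 - (1 / q).toReal) / 2)) := by
  have hπ := Real.pi_pos
  have h2t : (0:ℝ) < 2 * t := by linarith
  have hconv : (fun x : ℝ => ∫ y : ℝ, heatKernel t (x - y) * heatKernel t y)
      = heatKernel (2 * t) := funext (heatKernel_conv t ht)
  rw [hconv, eLpNorm_heatKernel r hr (2 * t) h2t, eLpNorm_heatKernel p hp t ht]
  have hcp := heatConst_pos p hp
  have hcr := heatConst_pos r hr
  rw [ENNReal.toReal_ofReal (div_nonneg hcr.le (Real.rpow_nonneg h2t.le _)),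
    ENNReal.toReal_ofReal (div_nonneg hcp.le (Real.rpow_nonneg ht.le _))]
  have hfin : ∀ a : ℝ≥0∞, 1 ≤ a → (1 / a) ≠ ∞ := fun a ha => by
    rw [one_div]
    exact ENNReal.inv_ne_top.mpr (zero_lt_one.trans_le ha).ne'
  have hrel : (1 / p).toReal + (1 / q).toReal = 1 + (1 / r).toReal := by
    rw [← ENNReal.toReal_add (hfin p hp) (hfin q hq), hpqr,
      ENNReal.toReal_add (by norm_num) (hfin r hr), ENNReal.toReal_one]
  set a := (1 / p).toReal
  set b := (1 / q).toReal
  set c := (1 / r).toReal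
  have hexp : (1 - c) / 2 = (1 - b) / 2 + (1 - a) / 2 := by linarith
  rw [Real.mul_rpow (by norm_num) ht.le, hexp, Real.rpow_add ht, Real.rpow_add two_pos]
  have h1 : (0:ℝ) < t ^ ((1 - b) / 2) := Real.rpow_pos_of_pos ht _
  have h2 : (0:ℝ) < t ^ ((1 - a) / 2) := Real.rpow_pos_of_pos ht _
  have h3 : (0:ℝ) < (2:ℝ) ^ ((1 - b) / 2) := Real.rpow_pos_of_pos two_pos _
  have h4 : (0:ℝ) < (2:ℝ) ^ ((1 - a) / 2) := Real.rpow_pos_of_pos two_pos _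
  field_simp
end

section
/- Let p, q, r ∈ (1, ∞) satisfy 1/p + 1/q = 1 + 1/r, let t > 0, and set β = (1−1/q)/(1−1/p). Then the function f = Θ_t^β (the heat kernel raised to the power β) belongs to L^p(ℝ) and achieves equality in the heat estimate: ‖f∗Θ_t‖_r = K_{p,q} ‖f‖_p t^{−(1−1/q)/2}, where K_{p,q} = (c_p c_q / c_r)^{1/2} α_q, c_p = p^{1/p}/(p')^{1/p'} (p' the conjugate exponent of p), and α_q = 1/((2√π)^{1−1/q} q^{1/(2q)}). -/
open MeasureTheory Real
open scoped ENNReal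

private lemma gauss_int (A c : ℝ) :
    ∫ x : ℝ, A * Real.exp (-(c * x ^ 2)) = A * Real.sqrt (Real.pi / c) := by
  rw [integral_const_mul]
  simp_rw [show ∀ y : ℝ, -(c * y ^ 2) = -c * y ^ 2 from fun y => (neg_mul _ _).symm]
  rw [integral_gaussian]

private lemma rpow_gauss (A c e x : ℝ) (hA : 0 < A) :
    (A * Real.exp (-(c * x ^ 2))) ^ e = A ^ e * Real.exp (-(e * c * x ^ 2)) := by
  rw [Real.mul_rpow hA.le (Real.exp_pos _).le, ← Real.exp_mul]
  congr 2
  ring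

private lemma conv_gauss (a c x : ℝ) (ha : 0 < a) (hc : 0 < c) :
    ∫ y : ℝ, Real.exp (-(a * (x - y) ^ 2)) * Real.exp (-(c * y ^ 2)) =
      Real.sqrt (Real.pi / (a + c)) * Real.exp (-(a * c / (a + c) * x ^ 2)) := by
  have hac : (0:ℝ) < a + c := by linarith
  have key : ∀ y : ℝ, Real.exp (-(a * (x - y) ^ 2)) * Real.exp (-(c * y ^ 2)) =
      Real.exp (-(a * c / (a + c) * x ^ 2)) *
        Real.exp (-((a + c) * (y - a * x / (a + c)) ^ 2)) := by
    intro y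
    rw [← Real.exp_add, ← Real.exp_add]
    congr 1
    field_simp
    ring
  simp_rw [key]
  rw [integral_const_mul,
    integral_sub_right_eq_self (fun y => Real.exp (-((a + c) * y ^ 2))) (a * x / (a + c))]
  simp_rw [show ∀ y : ℝ, -((a + c) * y ^ 2) = -(a + c) * y ^ 2 from fun y => (neg_mul _ _).symm]
  rw [integral_gaussian, mul_comm]

theorem heatKernel_power_equality (p q r : ℝ) (hp : 1 < p) (hq : 1 < q) (hr : 1 < r)
    (hpqr : 1 / p + 1 / q = 1 + 1 / r) (t : ℝ) (ht : 0 < t) :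
    MemLp (fun x : ℝ => heatKernel t x ^ ((1 - 1 / q) / (1 - 1 / p)))
        (ENNReal.ofReal p) (volume : Measure ℝ) ∧
      (∫ x : ℝ, |∫ y : ℝ, heatKernel t (x - y) ^ ((1 - 1 / q) / (1 - 1 / p)) *
            heatKernel t y| ^ r) ^ (1 / r) =
        Real.sqrt ((p ^ (1 / p) / (p / (p - 1)) ^ (1 - 1 / p)) *
              (q ^ (1 / q) / (q / (q - 1)) ^ (1 - 1 / q)) /
              (r ^ (1 / r) / (r / (r - 1)) ^ (1 - 1 / r))) *
          (1 / ((2 * Real.sqrt Real.pi) ^ (1 - 1 / q) * q ^ (1 / (2 * q)))) *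
          (∫ x : ℝ, |heatKernel t x ^ ((1 - 1 / q) / (1 - 1 / p))| ^ p) ^ (1 / p) *
          t ^ (-(1 - 1 / q) / 2) := by
  have hp0 : (0:ℝ) < p := by linarith
  have hq0 : (0:ℝ) < q := by linarith
  have hr0 : (0:ℝ) < r := by linarith
  have hp1 : (0:ℝ) < p - 1 := by linarith
  have hq1 : (0:ℝ) < q - 1 := by linarith
  have hr1 : (0:ℝ) < r - 1 := by linarith
  have hπ : (0:ℝ) < Real.pi := Real.pi_pos
  set C : ℝ := (2 * Real.sqrt (Real.pi * t))⁻¹ with hCdef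
  set k : ℝ := (4 * t)⁻¹ with hkdef
  set b : ℝ := (1 - 1 / q) / (1 - 1 / p) with hbdef
  have hsπt : 0 < Real.sqrt (Real.pi * t) := Real.sqrt_pos.mpr (by positivity)
  have hC : 0 < C := by rw [hCdef]; positivity
  have hk : 0 < k := by rw [hkdef]; positivity
  have h1p : 0 < 1 - 1 / p := by
    have : 1 / p < 1 := by rw [div_lt_one hp0]; linarith
    linarith
  have h1q : 0 < 1 - 1 / q := by
    have : 1 / q < 1 := by rw [div_lt_one hq0]; linarith
    linarith
  have h1r : 0 < 1 - 1 / r := by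
    have : 1 / r < 1 := by rw [div_lt_one hr0]; linarith
    linarith
  have hb : 0 < b := by rw [hbdef]; positivity
  have hb1p : 0 < b + 1 := by linarith
  have hhk : ∀ x : ℝ, heatKernel t x = C * Real.exp (-(k * x ^ 2)) := by
    intro x
    rw [heatKernel, div_eq_inv_mul, hCdef, hkdef]
    congr 2
    field_simp
  have hf : ∀ x : ℝ, heatKernel t x ^ b = C ^ b * Real.exp (-(b * k * x ^ 2)) := by
    intro x
    rw [hhk x]
    exact rpow_gauss C k b x hC
  have hCb : 0 < C ^ b := Real.rpow_pos_of_pos hC b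
  constructor
  · -- Memℒp part
    have hPne : ENNReal.ofReal p ≠ 0 := by
      simp [ENNReal.ofReal_eq_zero]; linarith
    have hPtop : ENNReal.ofReal p ≠ ∞ := ENNReal.ofReal_ne_top
    have hcont : Continuous (fun x : ℝ => heatKernel t x ^ b) := by
      have : (fun x : ℝ => heatKernel t x ^ b) =
          fun x : ℝ => C ^ b * Real.exp (-(b * k * x ^ 2)) := funext hf
      rw [this]
      fun_prop
    have hint : Integrable
        (fun x : ℝ => ‖heatKernel t x ^ b‖ ^ (ENNReal.ofReal p).toReal) := by
      have heq : ∀ x : ℝ, ‖heatKernel t x ^ b‖ ^ (ENNReal.ofReal p).toReal =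
          (C ^ b) ^ p * Real.exp (-(p * (b * k) * x ^ 2)) := by
        intro x
        rw [ENNReal.toReal_ofReal hp0.le, Real.norm_eq_abs,
          abs_of_pos (Real.rpow_pos_of_pos (by rw [hhk x]; positivity) b), hf x,
          rpow_gauss _ _ _ _ hCb]
      simp_rw [heq]
      apply Integrable.const_mul
      simp_rw [show ∀ y : ℝ, -(p * (b * k) * y ^ 2) = -(p * (b * k)) * y ^ 2 from
        fun y => (neg_mul _ _).symm]
      exact integrable_exp_neg_mul_sq (by positivity)
    refine (memLp_norm_rpow_iff (p := ENNReal.ofReal p) (μ := volume)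
      hcont.aestronglyMeasurable hPne hPtop).mp ?_
    rw [ENNReal.div_self hPne hPtop]
    exact memLp_one_iff_integrable.mpr hint
  -- the equality part
  have hIp : (∫ x : ℝ, |heatKernel t x ^ b| ^ p) =
      (C ^ b) ^ p * Real.sqrt (Real.pi / (p * (b * k))) := by
    have heq : ∀ x : ℝ, |heatKernel t x ^ b| ^ p =
        (C ^ b) ^ p * Real.exp (-(p * (b * k) * x ^ 2)) := by
      intro x
      rw [abs_of_pos (Real.rpow_pos_of_pos (by rw [hhk x]; positivity) b), hf x,
        rpow_gauss _ _ _ _ hCb]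
    simp_rw [heq]
    exact gauss_int _ _
  have hg : ∀ x : ℝ, (∫ y : ℝ, heatKernel t (x - y) ^ b * heatKernel t y) =
      C ^ b * C * Real.sqrt (Real.pi / (b * k + k)) *
        Real.exp (-(b * k * k / (b * k + k) * x ^ 2)) := by
    intro x
    have heq : ∀ y : ℝ, heatKernel t (x - y) ^ b * heatKernel t y =
        C ^ b * C * (Real.exp (-(b * k * (x - y) ^ 2)) * Real.exp (-(k * y ^ 2))) := by
      intro y
      rw [hf (x - y), hhk y]
      ring
    simp_rw [heq]
    rw [integral_const_mul, conv_gauss (b * k) k x (by positivity) hk]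
    ring
  have hbk : 0 < b * k + k := by positivity
  have hsA1 : 0 < Real.sqrt (Real.pi / (b * k + k)) := Real.sqrt_pos.mpr (by positivity)
  have hG : 0 < C ^ b * C * Real.sqrt (Real.pi / (b * k + k)) :=
    mul_pos (mul_pos hCb hC) hsA1
  have hIr : (∫ x : ℝ, |∫ y : ℝ, heatKernel t (x - y) ^ b * heatKernel t y| ^ r) =
      (C ^ b * C * Real.sqrt (Real.pi / (b * k + k))) ^ r *
        Real.sqrt (Real.pi / (r * (b * k * k / (b * k + k)))) := by
    have heq : ∀ x : ℝ, |∫ y : ℝ, heatKernel t (x - y) ^ b * heatKernel t y| ^ r =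
        (C ^ b * C * Real.sqrt (Real.pi / (b * k + k))) ^ r *
          Real.exp (-(r * (b * k * k / (b * k + k)) * x ^ 2)) := by
      intro x
      rw [hg x, abs_of_pos (by positivity), rpow_gauss _ _ _ _ hG]
    simp_rw [heq]
    exact gauss_int _ _
  rw [hIr, hIp]
  -- now a purely scalar identity
  have hm' : r * (b * k * k / (b * k + k)) = r * b * k / (b + 1) := by
    rw [show b * k + k = (b + 1) * k from by ring]
    field_simp
  rw [hm']
  -- log-based proof
  have key : ∀ x y : ℝ, 0 < x → 0 < y → Real.log x = Real.log y → x = y := by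
    intro x y hx hy h
    rw [← Real.exp_log hx, ← Real.exp_log hy, h]
  have hrbk : 0 < r * b * k / (b + 1) := by positivity
  have hs2 : 0 < Real.sqrt (Real.pi / (r * b * k / (b + 1))) :=
    Real.sqrt_pos.mpr (by positivity)
  have hGr : 0 < (C ^ b * C * Real.sqrt (Real.pi / (b * k + k))) ^ r :=
    Real.rpow_pos_of_pos hG r
  have hcp : 0 < p ^ (1/p) / (p / (p - 1)) ^ (1 - 1/p) :=
    div_pos (Real.rpow_pos_of_pos hp0 _) (Real.rpow_pos_of_pos (div_pos hp0 hp1) _)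
  have hcq : 0 < q ^ (1/q) / (q / (q - 1)) ^ (1 - 1/q) :=
    div_pos (Real.rpow_pos_of_pos hq0 _) (Real.rpow_pos_of_pos (div_pos hq0 hq1) _)
  have hcr : 0 < r ^ (1/r) / (r / (r - 1)) ^ (1 - 1/r) :=
    div_pos (Real.rpow_pos_of_pos hr0 _) (Real.rpow_pos_of_pos (div_pos hr0 hr1) _)
  have hsπ : 0 < Real.sqrt Real.pi := Real.sqrt_pos.mpr hπ
  have hαden : 0 < (2 * Real.sqrt Real.pi) ^ (1 - 1/q) * q ^ (1 / (2 * q)) :=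
    mul_pos (Real.rpow_pos_of_pos (by positivity) _) (Real.rpow_pos_of_pos hq0 _)
  have hpbk : 0 < p * (b * k) := by positivity
  have hsIp : 0 < Real.sqrt (Real.pi / (p * (b * k))) := Real.sqrt_pos.mpr (by positivity)
  apply key
  · positivity
  · positivity
  -- expand the logarithms
  have lC : Real.log C = -(Real.log 2 + (Real.log Real.pi + Real.log t) / 2) := by
    rw [hCdef, Real.log_inv, Real.log_mul two_ne_zero hsπt.ne',
      Real.log_sqrt (by positivity), Real.log_mul hπ.ne' ht.ne']
  have lk : Real.log k = -(2 * Real.log 2 + Real.log t) := by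
    rw [hkdef, Real.log_inv, Real.log_mul (by norm_num : (4:ℝ) ≠ 0) ht.ne',
      show (4:ℝ) = 2 ^ (2:ℕ) from by norm_num, Real.log_pow]
    push_cast
    ring
  have lb : Real.log b =
      Real.log p + Real.log (q - 1) - Real.log q - Real.log (p - 1) := by
    rw [hbdef, show (1 - 1/q) / (1 - 1/p) = p * (q - 1) / (q * (p - 1)) from by
        field_simp,
      Real.log_div (by positivity) (by positivity),
      Real.log_mul hp0.ne' hq1.ne', Real.log_mul hq0.ne' hp1.ne']
    ring
  have hb1e : b + 1 = p * (r - 1) / (r * (p - 1)) := by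
    have e1 : (1:ℝ) - 1/q = (1 - 1/r) - (1 - 1/p) := by linarith
    rw [hbdef, e1, sub_div, div_self h1p.ne', sub_add_cancel]
    field_simp
  have lb1 : Real.log (b + 1) =
      Real.log p + Real.log (r - 1) - Real.log r - Real.log (p - 1) := by
    rw [hb1e, Real.log_div (by positivity) (by positivity),
      Real.log_mul hp0.ne' hr1.ne', Real.log_mul hr0.ne' hp1.ne']
    ring
  rw [Real.log_rpow (mul_pos hGr hs2), Real.log_mul hGr.ne' hs2.ne',
    Real.log_rpow hG, Real.log_mul (mul_pos hCb hC).ne' hsA1.ne',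
    Real.log_mul hCb.ne' hC.ne', Real.log_rpow hC,
    Real.log_sqrt (by positivity : (0:ℝ) ≤ Real.pi / (b * k + k)),
    Real.log_div hπ.ne' hbk.ne',
    show b * k + k = (b + 1) * k from by ring, Real.log_mul hb1p.ne' hk.ne',
    Real.log_sqrt (by positivity : (0:ℝ) ≤ Real.pi / (r * b * k / (b + 1))),
    Real.log_div hπ.ne' hrbk.ne',
    Real.log_div (by positivity : (r * b * k : ℝ) ≠ 0) hb1p.ne',
    Real.log_mul (by positivity : (r * b : ℝ) ≠ 0) hk.ne',
    Real.log_mul hr0.ne' hb.ne',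
    -- RHS
    Real.log_mul (by positivity : (Real.sqrt _ * (1 / ((2 * Real.sqrt Real.pi) ^ (1 - 1/q) * q ^ (1 / (2 * q)))) * ((C ^ b) ^ p * Real.sqrt (Real.pi / (p * (b * k)))) ^ (1/p) : ℝ) ≠ 0) (by positivity : (t ^ (-(1 - 1/q)/2) : ℝ) ≠ 0),
    Real.log_mul (by positivity : (Real.sqrt _ * (1 / ((2 * Real.sqrt Real.pi) ^ (1 - 1/q) * q ^ (1 / (2 * q)))) : ℝ) ≠ 0) (by positivity : (((C ^ b) ^ p * Real.sqrt (Real.pi / (p * (b * k)))) ^ (1/p) : ℝ) ≠ 0),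
    Real.log_mul (by positivity : (Real.sqrt _ : ℝ) ≠ 0) (by positivity : ((1 / ((2 * Real.sqrt Real.pi) ^ (1 - 1/q) * q ^ (1 / (2 * q)))) : ℝ) ≠ 0),
    Real.log_sqrt (by positivity : (0:ℝ) ≤ _),
    Real.log_div (mul_pos hcp hcq).ne' hcr.ne',
    Real.log_mul hcp.ne' hcq.ne',
    Real.log_div (Real.rpow_pos_of_pos hp0 (1/p)).ne'
      (Real.rpow_pos_of_pos (div_pos hp0 hp1) (1 - 1/p)).ne',
    Real.log_div (Real.rpow_pos_of_pos hq0 (1/q)).ne'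
      (Real.rpow_pos_of_pos (div_pos hq0 hq1) (1 - 1/q)).ne',
    Real.log_div (Real.rpow_pos_of_pos hr0 (1/r)).ne'
      (Real.rpow_pos_of_pos (div_pos hr0 hr1) (1 - 1/r)).ne',
    Real.log_rpow hp0, Real.log_rpow (div_pos hp0 hp1),
    Real.log_rpow hq0, Real.log_rpow (div_pos hq0 hq1),
    Real.log_rpow hr0, Real.log_rpow (div_pos hr0 hr1),
    Real.log_div hp0.ne' hp1.ne', Real.log_div hq0.ne' hq1.ne',
    Real.log_div hr0.ne' hr1.ne',
    Real.log_div one_ne_zero hαden.ne', Real.log_one,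
    Real.log_mul (Real.rpow_pos_of_pos (by positivity) (1 - 1/q)).ne'
      (Real.rpow_pos_of_pos hq0 (1 / (2 * q))).ne',
    Real.log_rpow (by positivity : (0:ℝ) < 2 * Real.sqrt Real.pi),
    Real.log_mul two_ne_zero hsπ.ne',
    Real.log_sqrt hπ.le,
    Real.log_rpow hq0,
    Real.log_rpow (mul_pos (Real.rpow_pos_of_pos hCb p) hsIp),
    Real.log_mul (Real.rpow_pos_of_pos hCb p).ne' hsIp.ne',
    Real.log_rpow hCb, Real.log_rpow hC,
    Real.log_sqrt (by positivity : (0:ℝ) ≤ Real.pi / (p * (b * k))),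
    Real.log_div hπ.ne' hpbk.ne',
    Real.log_mul hp0.ne' (mul_pos hb hk).ne',
    Real.log_mul hb.ne' hk.ne',
    Real.log_rpow ht,
    lC, lk, lb, lb1]
  have hrinv : r * r⁻¹ = 1 := mul_inv_cancel₀ hr0.ne'
  have hpinv : p * p⁻¹ = 1 := mul_inv_cancel₀ hp0.ne'
  linear_combination (-(Real.log 2) -
      (Real.log Real.pi + Real.log t + Real.log q - Real.log (q - 1)) / 2) * hpqr +
    (-(b * Real.log 2) - b * Real.log Real.pi / 2 - b * Real.log t / 2 -
      Real.log p / 2 - Real.log (r - 1) / 2 + Real.log r / 2 +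
      Real.log (p - 1) / 2) * hrinv +
    (b * (Real.log 2 + Real.log Real.pi / 2 + Real.log t / 2)) * hpinv
end

section
/- Let 1 < p < ∞ and define f : ℝ → ℝ by f(x) = 1/(x^{1/p} (log x)²) for x ≥ e and f(x) = 0 otherwise. Then f ∈ L^p(ℝ), but for every s with 1 ≤ s < p and every t > 0, the convolution f∗Θ_t does not belong to L^s(ℝ). -/
open MeasureTheory Real
open scoped ENNReal

noncomputable def cfAux (p x : ℝ) : ℝ :=
  if Real.exp 1 ≤ x then 1 / (x ^ (1 / p) * Real.log x ^ 2) else 0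

lemma one_lt_exp_one : (1 : ℝ) < Real.exp 1 := by
  have := Real.add_one_le_exp (1 : ℝ); linarith

lemma cfAux_nonneg (p x : ℝ) : 0 ≤ cfAux p x := by
  unfold cfAux
  split_ifs with h
  · have hx0 : (0:ℝ) ≤ x := le_trans (by positivity) h
    exact div_nonneg zero_le_one
      (mul_nonneg (Real.rpow_nonneg hx0 _) (sq_nonneg _))
  · exact le_rfl

lemma log_one_le {x : ℝ} (hx : Real.exp 1 ≤ x) : 1 ≤ Real.log x := by
  have := Real.log_le_log (Real.exp_pos 1) hx
  rwa [Real.log_exp] at this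

lemma denom_one_le {p : ℝ} (hp : 0 < p) {x : ℝ} (hx : Real.exp 1 ≤ x) :
    1 ≤ x ^ (1 / p) * Real.log x ^ 2 := by
  have hx1 : (1:ℝ) ≤ x := le_trans one_lt_exp_one.le hx
  have h1 : (1:ℝ) ≤ x ^ (1 / p) := by
    have := Real.rpow_le_rpow zero_le_one hx1 (by positivity : (0:ℝ) ≤ 1 / p)
    rwa [Real.one_rpow] at this
  have h2 : (1:ℝ) ≤ Real.log x ^ 2 := by nlinarith [log_one_le hx]
  nlinarith

lemma cfAux_le_one {p : ℝ} (hp : 0 < p) (x : ℝ) : cfAux p x ≤ 1 := by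
  unfold cfAux
  split_ifs with h
  · rw [div_le_one (by linarith [denom_one_le hp h])]
    exact denom_one_le hp h
  · exact zero_le_one

lemma cfAux_anti {p : ℝ} (hp : 0 < p) {x y : ℝ} (hx : Real.exp 1 ≤ x) (hxy : x ≤ y) :
    cfAux p y ≤ cfAux p x := by
  have hx0 : 0 < x := lt_of_lt_of_le (by positivity) hx
  have hy0 : 0 < y := lt_of_lt_of_le hx0 hxy
  unfold cfAux
  rw [if_pos hx, if_pos (hx.trans hxy)]
  have hlx : (0:ℝ) < Real.log x := by linarith [log_one_le hx]
  have hden : 0 < x ^ (1 / p) * Real.log x ^ 2 :=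
    mul_pos (Real.rpow_pos_of_pos hx0 _) (by positivity)
  apply one_div_le_one_div_of_le hden
  have h1 : x ^ (1 / p) ≤ y ^ (1 / p) :=
    Real.rpow_le_rpow hx0.le hxy (by positivity)
  have h2 : Real.log x ^ 2 ≤ Real.log y ^ 2 := by
    have := Real.log_le_log hx0 hxy
    nlinarith
  nlinarith [Real.rpow_pos_of_pos hx0 (1/p), Real.rpow_pos_of_pos hy0 (1/p)]

lemma cfAux_meas (p : ℝ) : Measurable (cfAux p) := by
  unfold cfAux
  refine Measurable.ite measurableSet_Ici ?_ measurable_const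
  exact (measurable_const.div
    ((measurable_id.pow measurable_const).mul (Real.measurable_log.pow measurable_const)))

theorem convolution_not_in_smaller_Lp (p : ℝ) (hp : 1 < p) :
    MemLp (fun x : ℝ => if Real.exp 1 ≤ x then 1 / (x ^ (1 / p) * Real.log x ^ 2) else 0)
        (ENNReal.ofReal p) (volume : Measure ℝ) ∧
      ∀ s : ℝ, 1 ≤ s → s < p → ∀ t : ℝ, 0 < t →
        ¬ MemLp
          (fun x : ℝ => ∫ y : ℝ,
            (if Real.exp 1 ≤ x - y then 1 / ((x - y) ^ (1 / p) * Real.log (x - y) ^ 2) else 0) *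
              heatKernel t y)
          (ENNReal.ofReal s) (volume : Measure ℝ) := by
  have hp0 : 0 < p := lt_trans one_pos hp
  have hmeas := cfAux_meas p
  constructor
  · -- Part 1 : f ∈ L^p
    show MemLp (cfAux p) (ENNReal.ofReal p) volume
    have hq0 : (ENNReal.ofReal p) ≠ 0 := by
      simp only [ne_eq, ENNReal.ofReal_eq_zero, not_le]; linarith
    have hqt : (ENNReal.ofReal p) ≠ ∞ := ENNReal.ofReal_ne_top
    have htr : (ENNReal.ofReal p).toReal = p := ENNReal.toReal_ofReal hp0.le
    have hbigInt : Integrable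
        ((Set.Ici (Real.exp 1)).indicator (fun x => 1 / (x * Real.log x ^ 2))) := by
      rw [integrable_indicator_iff measurableSet_Ici]
      rw [integrableOn_Ici_iff_integrableOn_Ioi]
      have hderiv : ∀ x ∈ Set.Ici (Real.exp 1),
          HasDerivAt (fun x => -(Real.log x)⁻¹) (1 / (x * Real.log x ^ 2)) x := by
        intro x hx
        have hx0 : 0 < x := lt_of_lt_of_le (by positivity) hx
        have hlx : (0:ℝ) < Real.log x := by linarith [log_one_le hx]
        have h := ((Real.hasDerivAt_log hx0.ne').inv hlx.ne').neg
        have e : 1 / (x * Real.log x ^ 2) = -(-x⁻¹ / Real.log x ^ 2) := by ring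
        rw [e]; exact h
      refine integrableOn_Ioi_deriv_of_nonneg' (l := 0) hderiv ?_ ?_
      · intro x hx
        have hx0 : 0 < x := lt_of_lt_of_le (by positivity) hx.le
        have hlx : (0:ℝ) < Real.log x := by linarith [log_one_le hx.le]
        positivity
      · have h0 : Filter.Tendsto (fun x : ℝ => -(Real.log x)⁻¹) Filter.atTop (nhds (-0)) :=
          (Real.tendsto_log_atTop.inv_tendsto_atTop).neg
        rwa [neg_zero] at h0
    have hint : Integrable (fun x => ‖cfAux p x‖ ^ p) volume := by
      refine hbigInt.mono ((hmeas.norm.pow measurable_const).aestronglyMeasurable)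
        (Filter.Eventually.of_forall fun x => ?_)
      by_cases hx : Real.exp 1 ≤ x
      · have hx0 : 0 < x := lt_of_lt_of_le (by positivity) hx
        have hlx : (1:ℝ) ≤ Real.log x := log_one_le hx
        have hL : (1:ℝ) ≤ Real.log x ^ 2 := by nlinarith
        have hA : 0 < x ^ (1/p) := Real.rpow_pos_of_pos hx0 _
        rw [Set.indicator_of_mem (show x ∈ Set.Ici (Real.exp 1) from hx)]
        have hfx : cfAux p x = 1 / (x ^ (1/p) * Real.log x ^ 2) := if_pos hx
        rw [hfx, Real.norm_eq_abs, Real.norm_eq_abs,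
          abs_of_nonneg (by positivity : (0:ℝ) ≤ 1 / (x ^ (1/p) * Real.log x ^ 2)),
          abs_of_nonneg (Real.rpow_nonneg (by positivity) _),
          Real.norm_eq_abs,
          abs_of_nonneg (by positivity : (0:ℝ) ≤ 1 / (x * Real.log x ^ 2))]
        rw [one_div, Real.inv_rpow (by positivity)]
        rw [Real.mul_rpow hA.le (by positivity)]
        have hAp : (x ^ (1/p)) ^ p = x := by
          rw [← Real.rpow_mul hx0.le, show 1/p*p = 1 by field_simp, Real.rpow_one]
        rw [hAp]
        rw [mul_inv]
        have hLp : Real.log x ^ 2 ≤ (Real.log x ^ 2) ^ p := by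
          have h := Real.rpow_le_rpow_of_exponent_le hL (le_of_lt hp)
          rwa [Real.rpow_one] at h
        have hLinv : ((Real.log x ^ 2) ^ p)⁻¹ ≤ (Real.log x ^ 2)⁻¹ := by
          apply inv_anti₀ (by linarith) hLp
        rw [one_div, mul_inv]
        have : 0 < (Real.log x ^ 2 : ℝ) ^ p := Real.rpow_pos_of_pos (by linarith) _
        have hxinv : (0:ℝ) ≤ x⁻¹ := by positivity
        exact mul_le_mul_of_nonneg_left hLinv hxinv
      · rw [Set.indicator_of_notMem (show x ∉ Set.Ici (Real.exp 1) from hx),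
          show cfAux p x = 0 from if_neg hx]
        simp [Real.zero_rpow hp0.ne']
    have h1 : MemLp (fun x => ‖cfAux p x‖ ^ (ENNReal.ofReal p).toReal)
        (ENNReal.ofReal p / ENNReal.ofReal p) volume := by
      rw [htr, ENNReal.div_self hq0 hqt]
      exact (memLp_one_iff_integrable).mpr hint
    exact (memLp_norm_rpow_iff hmeas.aestronglyMeasurable hq0 hqt).mp h1
  · -- Part 2
    intro s hs1 hsp t ht hmem
    have hs0 : (0:ℝ) < s := lt_of_lt_of_le one_pos hs1
    have hq0 : (ENNReal.ofReal s) ≠ 0 := by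
      simp only [ne_eq, ENNReal.ofReal_eq_zero, not_le]; linarith
    have htrs : (ENNReal.ofReal s).toReal = s := ENNReal.toReal_ofReal hs0.le
    replace hmem : MemLp (fun x : ℝ => ∫ y : ℝ, cfAux p (x - y) * heatKernel t y)
        (ENNReal.ofReal s) volume := hmem
    -- heat kernel facts
    have hπt : 0 < Real.pi * t := mul_pos Real.pi_pos ht
    have hD : 0 < 2 * Real.sqrt (Real.pi * t) := by positivity
    set c : ℝ := Real.exp (-1 / (4 * t)) / (2 * Real.sqrt (Real.pi * t)) with hc
    have hc0 : 0 < c := div_pos (Real.exp_pos _) hD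
    have hΘ_nonneg : ∀ y, 0 ≤ heatKernel t y := fun y =>
      div_nonneg (Real.exp_pos _).le hD.le
    have hΘ_int : Integrable (heatKernel t) := by
      have h1 : Integrable (fun y : ℝ =>
          Real.exp (-(1/(4*t)) * y^2) / (2 * Real.sqrt (Real.pi * t))) :=
        (integrable_exp_neg_mul_sq (by positivity)).div_const _
      refine h1.congr (Filter.Eventually.of_forall fun y => ?_)
      simp only [heatKernel]
      rw [show -(1/(4*t)) * y^2 = -y^2/(4*t) by ring]
    have hΘ_lb : ∀ y ∈ Set.Icc (-1:ℝ) 0, c ≤ heatKernel t y := by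
      intro y hy
      have hy2 : y^2 ≤ 1 := by nlinarith [hy.1, hy.2]
      simp only [heatKernel, hc]
      have h1 : Real.exp (-1/(4*t)) ≤ Real.exp (-y^2/(4*t)) := by
        rw [Real.exp_le_exp, div_le_div_iff₀ (by positivity) (by positivity)]
        nlinarith
      exact (div_le_div_iff_of_pos_right hD).mpr h1
    -- integrability of the integrand
    have hInt : ∀ x : ℝ, Integrable (fun y => cfAux p (x - y) * heatKernel t y) := by
      intro x
      refine hΘ_int.bdd_mul ((hmeas.comp (measurable_const.sub measurable_id)).aestronglyMeasurable)
        (c := 1) (Filter.Eventually.of_forall fun y => ?_)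
      rw [Real.norm_eq_abs, abs_of_nonneg (cfAux_nonneg p _)]
      exact cfAux_le_one hp0 _
    -- key pointwise lower bound
    have hkey : ∀ x : ℝ, Real.exp 1 ≤ x →
        c * cfAux p (x+1) ≤ ∫ y, cfAux p (x - y) * heatKernel t y := by
      intro x hx
      have h1 : ∫ y in Set.Icc (-1:ℝ) 0, cfAux p (x - y) * heatKernel t y ≤
          ∫ y, cfAux p (x - y) * heatKernel t y :=
        setIntegral_le_integral (hInt x)
          (Filter.Eventually.of_forall fun y => mul_nonneg (cfAux_nonneg p _) (hΘ_nonneg y))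
      refine le_trans ?_ h1
      have hvol : (volume (Set.Icc (-1:ℝ) 0)).toReal = 1 := by
        rw [Real.volume_Icc]; norm_num
      have h2 : ∫ _ in Set.Icc (-1:ℝ) 0, (cfAux p (x+1) * c) = c * cfAux p (x+1) := by
        rw [setIntegral_const, measureReal_def, hvol, one_smul, mul_comm]
      rw [← h2]
      refine setIntegral_mono_on ?_ (hInt x).integrableOn measurableSet_Icc ?_
      · exact (integrableOn_const_iff).mpr (Or.inr (by rw [Real.volume_Icc]; exact ENNReal.ofReal_lt_top))
      · intro y hy
        have hy1 : x ≤ x - y := by linarith [hy.2]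
        have hy2 : x - y ≤ x + 1 := by linarith [hy.1]
        exact mul_le_mul (cfAux_anti hp0 (le_trans hx hy1) hy2) (hΘ_lb y hy)
          hc0.le (cfAux_nonneg p _)
    -- integrability of ‖g‖^s from the assumption
    have hgInt : Integrable
        (fun x => ‖∫ y, cfAux p (x - y) * heatKernel t y‖ ^ s) volume := by
      have h := hmem.integrable_norm_rpow hq0 ENNReal.ofReal_ne_top
      rwa [htrs] at h
    have hφmeas : Measurable (fun x => (c * cfAux p (x+1)) ^ s) :=
      (((hmeas.comp (measurable_id.add_const 1)).const_mul c).pow measurable_const)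
    have hφInt : IntegrableOn (fun x => (c * cfAux p (x+1)) ^ s) (Set.Ici (Real.exp 1)) := by
      refine (hgInt.restrict (s := Set.Ici (Real.exp 1))).mono
        hφmeas.aestronglyMeasurable ?_
      rw [ae_restrict_iff' measurableSet_Ici]
      refine Filter.Eventually.of_forall fun x hx => ?_
      have h0 : 0 ≤ c * cfAux p (x+1) := mul_nonneg hc0.le (cfAux_nonneg p _)
      rw [Real.norm_eq_abs, abs_of_nonneg (Real.rpow_nonneg h0 _), Real.norm_eq_abs,
        abs_of_nonneg (Real.rpow_nonneg (norm_nonneg _) _)]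
      exact Real.rpow_le_rpow h0 ((hkey x hx).trans (le_abs_self _)) hs0.le
    -- choose exponent r with s/p < r < 1
    set r : ℝ := (s / p + 1) / 2 with hrdef
    have hsp1 : s / p < 1 := (div_lt_one hp0).mpr hsp
    have hsp0 : 0 < s / p := div_pos hs0 hp0
    have hr1 : r < 1 := by rw [hrdef]; linarith
    have hrs : s / p < r := by rw [hrdef]; linarith
    have hr0 : 0 < r := by rw [hrdef]; positivity
    have hlo := isLittleO_log_rpow_rpow_atTop (2 * s) (sub_pos.mpr hrs)
    have hev : ∀ᶠ u in Filter.atTop, Real.log u ^ (2 * s) ≤ u ^ (r - s / p) := by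
      filter_upwards [hlo.bound one_pos, Filter.eventually_ge_atTop (1:ℝ)] with u h1 h2
      rw [Real.norm_eq_abs, Real.norm_eq_abs, one_mul,
        abs_of_nonneg (Real.rpow_nonneg (Real.log_nonneg h2) _),
        abs_of_nonneg (Real.rpow_nonneg (by linarith) _)] at h1
      exact h1
    obtain ⟨M₀, hM₀⟩ := Filter.eventually_atTop.mp hev
    set M := max M₀ (max (Real.exp 1) 1) with hM
    have hM1 : (1:ℝ) ≤ M := le_max_of_le_right (le_max_right _ _)
    have hMe : Real.exp 1 ≤ M := le_max_of_le_right (le_max_left _ _)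
    have hMM0 : M₀ ≤ M := le_max_left _ _
    have hM0 : 0 < M := lt_of_lt_of_le one_pos hM1
    set K : ℝ := c ^ s * 2 ^ (-r) with hK
    have hK0 : 0 < K := mul_pos (Real.rpow_pos_of_pos hc0 _) (Real.rpow_pos_of_pos two_pos _)
    have hbound : ∀ x ∈ Set.Ioi M, K * x ^ (-r) ≤ (c * cfAux p (x+1)) ^ s := by
      intro x hx
      have hx1 : 1 ≤ x := le_trans hM1 (le_of_lt hx)
      have hx0 : 0 < x := by linarith
      have hu : Real.exp 1 ≤ x + 1 := by
        have := le_of_lt (lt_of_le_of_lt hMe hx); linarith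
      have hu0 : 0 < x + 1 := by linarith
      have hlogu : 1 ≤ Real.log (x+1) := log_one_le hu
      have hMu : M₀ ≤ x + 1 := by linarith [le_of_lt (lt_of_le_of_lt hMM0 hx)]
      have hL2s : Real.log (x+1) ^ (2 * s) ≤ (x+1) ^ (r - s / p) := hM₀ _ hMu
      -- compute cfAux (x+1) ^ s
      have hval : cfAux p (x+1) = ((x+1) ^ (1/p) * Real.log (x+1) ^ 2)⁻¹ := by
        rw [show cfAux p (x+1) = 1 / ((x+1) ^ (1/p) * Real.log (x+1) ^ 2) from if_pos hu,
          one_div]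
      have hA : 0 < (x+1) ^ (1/p) := Real.rpow_pos_of_pos hu0 _
      have hLpos : (0:ℝ) < Real.log (x+1) ^ 2 := by nlinarith
      have hden : 0 < (x+1) ^ (1/p) * Real.log (x+1) ^ 2 := mul_pos hA hLpos
      have hcf : cfAux p (x+1) ^ s =
          ((x+1) ^ (s/p) * Real.log (x+1) ^ (2 * s))⁻¹ := by
        rw [hval, ← Real.rpow_natCast (Real.log (x+1)) 2]
        rw [Real.inv_rpow (by positivity)]
        rw [Real.mul_rpow hA.le (by positivity)]
        rw [← Real.rpow_mul hu0.le, ← Real.rpow_mul (Real.log_nonneg (by linarith))]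
        rw [show 1/p*s = s/p by ring]
        norm_num
      have hstep1 : ((x+1) ^ (s/p) * Real.log (x+1) ^ (2 * s)) ≤ (x+1) ^ r := by
        calc (x+1) ^ (s/p) * Real.log (x+1) ^ (2 * s)
            ≤ (x+1) ^ (s/p) * (x+1) ^ (r - s/p) := by
              exact mul_le_mul_of_nonneg_left hL2s (Real.rpow_nonneg hu0.le _)
          _ = (x+1) ^ r := by
              rw [← Real.rpow_add hu0]; ring_nf
      have hstep2 : (x+1) ^ (-r) ≤ cfAux p (x+1) ^ s := by
        rw [hcf, Real.rpow_neg hu0.le]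
        exact inv_anti₀ (by positivity) hstep1
      have hstep3 : K * x ^ (-r) ≤ c ^ s * (x+1) ^ (-r) := by
        rw [hK, mul_assoc]
        refine mul_le_mul_of_nonneg_left ?_ (Real.rpow_nonneg hc0.le _)
        rw [← Real.mul_rpow (by norm_num) hx0.le]
        exact Real.rpow_le_rpow_of_nonpos hu0 (by linarith) (by linarith)
      calc K * x ^ (-r) ≤ c ^ s * (x+1) ^ (-r) := hstep3
        _ ≤ c ^ s * cfAux p (x+1) ^ s :=
            mul_le_mul_of_nonneg_left hstep2 (Real.rpow_nonneg hc0.le _)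
        _ = (c * cfAux p (x+1)) ^ s :=
            (Real.mul_rpow hc0.le (cfAux_nonneg p _)).symm
    have hsub : Set.Ioi M ⊆ Set.Ici (Real.exp 1) := fun x hx => le_trans hMe (le_of_lt hx)
    have hKInt : IntegrableOn (fun x => K * x ^ (-r)) (Set.Ioi M) := by
      refine Integrable.mono (hφInt.mono_set hsub)
        (((measurable_id.pow measurable_const).const_mul K).aestronglyMeasurable) ?_
      rw [ae_restrict_iff' measurableSet_Ioi]
      refine Filter.Eventually.of_forall fun x hx => ?_
      have hx0 : (0:ℝ) < x := lt_trans hM0 hx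
      have h0 : 0 ≤ c * cfAux p (x+1) := mul_nonneg hc0.le (cfAux_nonneg p _)
      rw [Real.norm_eq_abs, abs_of_nonneg (by positivity), Real.norm_eq_abs,
        abs_of_nonneg (Real.rpow_nonneg h0 _)]
      exact hbound x hx
    have hrInt : IntegrableOn (fun x : ℝ => x ^ (-r)) (Set.Ioi M) := by
      have h := hKInt.const_mul K⁻¹
      refine h.congr (Filter.Eventually.of_forall fun x => ?_)
      field_simp
    rw [integrableOn_Ioi_rpow_iff hM0] at hrInt
    linarith
end
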